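/- Let α > 1 be irrational with convergent numerators p_n satisfying p_n > 2p_{n-1} for all n greater than some N (equivalently, only finitely many partial quotients equal 1). Then the set {p_n} of convergent numerators admits more than one avoiding partition of ℕ⁺. -/

import Mathlib

/-!
Colour `m` by the sign of `E α m`. If `x < y`, `x + y = p_n` and `E α x`, `E α y` had the
same sign, then `k α = E α x + E α y + (q_n α - p_n)` for an integer `k ∈ {-1, 0, 1}`, and
`(2 round (x / α) + k) α - 2 x` would be an integer combination with coefficient of `α` in
`(0, q_n)` lying on the same side of `0` as `q_n α - p_n` and less than twice as far from it;
writing it in the unimodular basis of two consecutive convergents shows this is impossible.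

When `p_{n+1} > 2 p_n` for `n ≥ N`, every `y ≥ p_{N+1}` has at most one neighbour `x < y`
with `x + y` a numerator, and `p_{N+1}` has none, so the vertices reached upwards from
`p_{N+1}` form a union of components of the sum graph. Flipping the colours there gives a
second avoiding partition.
-/

/-- `E α n` is the error `n - qα` where `qα` is the integer multiple of `α`
nearest to `n` (for `α > 1`, this multiple is `round (n/α) * α`). -/
noncomputable def E (α : ℝ) (n : ℕ) : ℝ := (n : ℝ) - round ((n : ℝ) / α) * α

/-- `A_α`: positive integers whose nearest multiple of `α` exceeds them. -/
def Aset (α : ℝ) : Set ℕ := {n | 0 < n ∧ E α n < 0}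

/-- `B_α`: positive integers whose nearest multiple of `α` is below them. -/
def Bset (α : ℝ) : Set ℕ := {n | 0 < n ∧ 0 < E α n}

/-- `S_α`: positive integers not expressible as a sum of two distinct elements
of `A_α` nor of two distinct elements of `B_α`. -/
def Sset (α : ℝ) : Set ℕ :=
  {s | 0 < s ∧ (∀ x ∈ Aset α, ∀ y ∈ Aset α, x ≠ y → x + y ≠ s) ∧
       (∀ x ∈ Bset α, ∀ y ∈ Bset α, x ≠ y → x + y ≠ s)}
/-- Data of the continued fraction expansion `α = [a 0; a 1, a 2, ...]` of an
irrational `α > 1`, with `t n` the successive complete quotients, and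
`p n / q n` the convergents. -/
structure CF (α : ℝ) where
  a : ℕ → ℕ
  t : ℕ → ℝ
  p : ℕ → ℕ
  q : ℕ → ℕ
  t0 : t 0 = α
  ha : ∀ n, 1 ≤ a n
  floor_t : ∀ n, (a n : ℝ) = ⌊t n⌋
  t_rec : ∀ n, t n = a n + 1 / t (n + 1)
  p0 : p 0 = a 0
  p1 : p 1 = a 1 * a 0 + 1
  p_rec : ∀ n, p (n + 2) = a (n + 2) * p (n + 1) + p n
  q0 : q 0 = 1
  q1 : q 1 = a 1
  q_rec : ∀ n, q (n + 2) = a (n + 2) * q (n + 1) + q n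

/-- The numerators extended by two initial terms: `P 0 = p_{-2} = 0`,
`P 1 = p_{-1} = 1`, and `P (n+2) = p n`. -/
def CF.P {α : ℝ} (c : CF α) : ℕ → ℕ
  | 0 => 0
  | 1 => 1
  | n + 2 => c.p n
/-- The graph `G S` on the positive integers with an edge between distinct
`x, y` whenever `x + y ∈ S`. -/
def G (S : Set ℕ+) : SimpleGraph ℕ+ where
  Adj x y := x ≠ y ∧ x + y ∈ S
  symm := by
    constructor
    intro x y h
    exact ⟨h.1.symm, by rw [add_comm]; exact h.2⟩
  loopless := by
    constructor
    intro x h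
    exact h.1 rfl

/-- The partition `{A, Aᶜ}` of `ℕ+` avoids `S`: no two distinct elements of
the same part sum to an element of `S`. -/
def Avoids (A S : Set ℕ+) : Prop :=
  (∀ x ∈ A, ∀ y ∈ A, x ≠ y → x + y ∉ S) ∧
  (∀ x ∈ Aᶜ, ∀ y ∈ Aᶜ, x ≠ y → x + y ∉ S)

/-- `S` is avoidable: some partition of `ℕ+` avoids it. -/
def Avoidable (S : Set ℕ+) : Prop := ∃ A, Avoids A S

/-- `S` is uniquely avoidable: exactly one partition of `ℕ+` avoids it. -/
def UniquelyAvoidable (S : Set ℕ+) : Prop :=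
  ∃ A, Avoids A S ∧ ∀ A', Avoids A' S → A' = A ∨ A' = Aᶜ

open scoped symmDiff

section Avoidance

variable {S : Set ℕ+}

theorem avoids_iff_adj {A : Set ℕ+} :
    Avoids A S ↔ ∀ x y, (G S).Adj x y → (x ∈ A ↔ y ∉ A) := by
  constructor
  · rintro ⟨hA, hAc⟩ x y ⟨hxy, hS⟩
    exact ⟨fun hx hy => hA x hx y hy hxy hS, fun hy => by_contra fun hx => hAc x hx y hy hxy hS⟩
  · intro h
    exact ⟨fun x hx y hy hxy hS => (h x y ⟨hxy, hS⟩).1 hx hy,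
      fun x hx y hy hxy hS => hx ((h x y ⟨hxy, hS⟩).2 hy)⟩

theorem avoids_setOf_neg (f : ℕ+ → ℝ) (hf : ∀ x y, (G S).Adj x y → f x * f y < 0) :
    Avoids {m | f m < 0} S := by
  refine avoids_iff_adj.2 fun x y hxy => ?_
  have := mul_neg_iff.1 (hf x y hxy)
  simp only [Set.mem_ofPred_eq]
  constructor <;> intro <;> rcases this with h | h <;> linarith [h.1, h.2]

theorem Avoids.symmDiff {A T : Set ℕ+} (hA : Avoids A S)
    (hT : ∀ x y, (G S).Adj x y → (x ∈ T ↔ y ∈ T)) : Avoids (A ∆ T) S := by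
  refine avoids_iff_adj.2 fun x y hxy => ?_
  have h1 := avoids_iff_adj.1 hA x y hxy
  have h2 := hT x y hxy
  simp only [Set.mem_symmDiff]
  tauto

end Avoidance

inductive SumTree (S : Set ℕ+) (r : ℕ+) : ℕ+ → Prop
  | root : SumTree S r r
  | step {x y : ℕ+} : SumTree S r x → x < y → x + y ∈ S → SumTree S r y

namespace SumTree

variable {S : Set ℕ+} {r : ℕ+}

theorem le {x : ℕ+} (h : SumTree S r x) : r ≤ x := by
  induction h with
  | root => exact le_rfl
  | step _ hxy _ ih => exact ih.trans hxy.le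

/-- In `G S`, `r` has no smaller neighbour (`hroot`) and every `y ≥ r` at most one (`hsparse`). -/
theorem iff_of_adj (hroot : ∀ z ∈ S, ¬ ((r : ℕ) < z ∧ (z : ℕ) < 2 * r))
    (hsparse : ∀ y : ℕ+, r ≤ y → ∀ z ∈ S, ∀ z' ∈ S,
      (y : ℕ) < z → (z : ℕ) < 2 * y → (y : ℕ) < z' → (z' : ℕ) < 2 * y → z = z')
    {x y : ℕ+} (hadj : (G S).Adj x y) : SumTree S r x ↔ SumTree S r y := by
  suffices key : ∀ x y : ℕ+, x < y → x + y ∈ S → (SumTree S r x ↔ SumTree S r y) by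
    obtain ⟨hne, hS⟩ := hadj
    rcases lt_or_gt_of_ne hne with hlt | hlt
    · exact key x y hlt hS
    · exact (key y x hlt (add_comm x y ▸ hS)).symm
  intro x y hxy hS
  have hxy' : (x : ℕ) < y := hxy
  have hxy_coe := PNat.add_coe x y
  have hx0 := x.pos
  refine ⟨fun hx => step hx hxy hS, fun hy => ?_⟩
  cases hy with
  | root => exact absurd ⟨by omega, by omega⟩ (hroot _ hS)
  | step hx' hx'y hS' =>
    rename_i x'
    have hx'y' : (x' : ℕ) < y := hx'y
    have hx'y_coe := PNat.add_coe x' y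
    have hx'0 := x'.pos
    have heq := hsparse y (hx'.le.trans hx'y.le) _ hS _ hS' (by omega) (by omega)
      (by omega) (by omega)
    rwa [(add_left_inj y).1 heq]

end SumTree

section Lacunary

variable {s : ℕ → ℕ} {N : ℕ}

theorem two_mul_lt_of_lt (hs : Monotone s) (hlac : ∀ n, N ≤ n → 2 * s n < s (n + 1))
    {j k : ℕ} (hj : N ≤ j) (hjk : s j < s k) : 2 * s j < s k :=
  calc 2 * s j < s (j + 1) := hlac j hj
    _ ≤ s k := hs (Nat.succ_le_of_lt (hs.reflect_lt hjk))

theorem eq_of_mem_Ioo_two_mul (hs : Monotone s) (hlac : ∀ n, N ≤ n → 2 * s n < s (n + 1))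
    {y j k : ℕ} (hy : s N ≤ y) (hj : y < s j ∧ s j < 2 * y)
    (hk : y < s k ∧ s k < 2 * y) : s j = s k := by
  have key : ∀ {j k : ℕ}, y < s j → s j < s k → s k < 2 * y → False := by
    intro j k hj hjk hk
    have hNj : N ≤ j := le_of_not_gt fun hjN => by have := hs hjN.le; omega
    have := two_mul_lt_of_lt hs hlac hNj hjk
    omega
  rcases lt_trichotomy (s j) (s k) with h | h | h
  · exact (key hj.1 h hk.2).elim
  · exact h
  · exact (key hk.1 h hj.2).elim

theorem exists_avoids_ne (hs : Monotone s) (hlac : ∀ n, N ≤ n → 2 * s n < s (n + 1))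
    (hpos : 0 < s N) {A : Set ℕ+} (hA : Avoids A {m : ℕ+ | ∃ n, (m : ℕ) = s n}) :
    ∃ A' : Set ℕ+, Avoids A' {m : ℕ+ | ∃ n, (m : ℕ) = s n} ∧
      A' ≠ A ∧ A' ≠ Aᶜ := by
  set S := {m : ℕ+ | ∃ n, (m : ℕ) = s n}
  have hr : 2 * s N < s (N + 1) := hlac N le_rfl
  set r : ℕ+ := ⟨s (N + 1), by omega⟩
  set T : Set ℕ+ := {x | SumTree S r x}
  have hroot : ∀ z ∈ S, ¬ ((r : ℕ) < z ∧ (z : ℕ) < 2 * r) := by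
    rintro z ⟨k, hk⟩ ⟨h1, h2⟩
    have h1' : s (N + 1) < s k := hk ▸ h1
    have h2' : s k < 2 * s (N + 1) := hk ▸ h2
    have := two_mul_lt_of_lt hs hlac (by omega : N ≤ N + 1) h1'
    omega
  have hsparse : ∀ y : ℕ+, r ≤ y → ∀ z ∈ S, ∀ z' ∈ S,
      (y : ℕ) < z → (z : ℕ) < 2 * y → (y : ℕ) < z' → (z' : ℕ) < 2 * y → z = z' := by
    rintro y hy z ⟨j, hj⟩ z' ⟨k, hk⟩ h1 h2 h3 h4
    have hy' : s (N + 1) ≤ y := hy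
    exact PNat.coe_injective (hj.trans ((eq_of_mem_Ioo_two_mul hs hlac (by omega)
      ⟨hj ▸ h1, hj ▸ h2⟩ ⟨hk ▸ h3, hk ▸ h4⟩).trans hk.symm))
  refine ⟨A ∆ T, hA.symmDiff fun x y => SumTree.iff_of_adj hroot hsparse, ?_, ?_⟩
  · rw [Ne, symmDiff_eq_left]
    exact Set.nonempty_iff_ne_empty.1 ⟨r, SumTree.root⟩
  · intro h
    have hT : T = Set.univ := by
      rw [← symmDiff_symmDiff_cancel_left A T, h, symmDiff_compl_self]; rfl
    have h1 : (r : ℕ) ≤ 1 := (hT ▸ Set.mem_univ 1 : (1 : ℕ+) ∈ T).le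
    simp only [r, PNat.mk_coe] at h1
    omega

end Lacunary

theorem mul_nonpos_or_two_mul_sq_le_of_lt {Q Q' u v : ℤ} {e e' : ℝ} (hQ : 0 < Q)
    (hQQ' : Q ≤ Q') (hpos : 0 < u * Q + v * Q') (hlt : u * Q + v * Q' < Q) (he : e * e' ≤ 0) :
    (u * e + v * e') * e ≤ 0 ∨ 2 * e ^ 2 ≤ (u * e + v * e') * e := by
  have huv : (u ≤ -1 ∧ 1 ≤ v) ∨ (2 ≤ u ∧ v ≤ -1) := by
    have hv0 : v ≠ 0 := by
      rintro rfl
      rcases le_or_gt u 0 with hu | hu <;> nlinarith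
    rcases lt_or_gt_of_ne hv0 with hv | hv
    · exact Or.inr ⟨by nlinarith, by omega⟩
    · exact Or.inl ⟨by nlinarith, by omega⟩
  rcases huv with ⟨hu, hv⟩ | ⟨hu, hv⟩
  · have hu' : (u : ℝ) ≤ -1 := by exact_mod_cast hu
    have hv' : (1 : ℝ) ≤ v := by exact_mod_cast hv
    left; nlinarith [sq_nonneg e]
  · have hu' : (2 : ℝ) ≤ u := by exact_mod_cast hu
    have hv' : (v : ℝ) ≤ -1 := by exact_mod_cast hv
    right; nlinarith [sq_nonneg e]

theorem abs_E_lt_half {α : ℝ} (hα : 0 < α) (hirr : Irrational α) (x : ℕ) :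
    |E α x| < α / 2 := by
  set r := round ((x : ℝ) / α)
  have hE : E α x = ((x : ℝ) / α - r) * α := by simp only [E, r]; field_simp
  have hle : |E α x| ≤ α / 2 := by
    rw [hE, abs_mul, abs_of_pos hα]
    nlinarith [abs_sub_round ((x : ℝ) / α)]
  refine hle.lt_of_ne fun heq => ?_
  -- `|E α x| = α / 2` would give `(2 r ± 1) α = 2 x`
  rcases (abs_eq (by positivity)).1 heq with h | h
  · refine (hirr.intCast_mul (by omega : 2 * r + 1 ≠ 0)).ne_nat (2 * x) ?_
    simp only [E] at h; push_cast; linarith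
  · refine (hirr.intCast_mul (by omega : 2 * r - 1 ≠ 0)).ne_nat (2 * x) ?_
    simp only [E] at h; push_cast; linarith

theorem E_ne_zero {α : ℝ} (hirr : Irrational α) {x : ℕ} (hx : 0 < x) : E α x ≠ 0 := by
  intro h
  set r := round ((x : ℝ) / α)
  rcases eq_or_ne r 0 with hr | hr
  · simp only [E, r, hr, Int.cast_zero, zero_mul, sub_zero, Nat.cast_eq_zero] at h; omega
  · exact (hirr.intCast_mul hr).ne_nat x (by simp only [E] at h; linarith)

theorem mul_pos_and_lt_two_mul_sq {α Ex Ey e : ℝ} {k : ℤ} (hα : 1 < α) (hEx : |Ex| < α / 2)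
    (hEy : |Ey| < α / 2) (hEE : 0 < Ex * Ey) (he : |e| < 1) (hk : k * α = Ex + Ey + e) :
    0 < (k * α - 2 * Ex) * e ∧ (k * α - 2 * Ex) * e < 2 * e ^ 2 := by
  rw [abs_lt] at hEx hEy he
  have hk1 : (k : ℝ) < 2 := by by_contra h; push Not at h; nlinarith
  have hk2 : (-2 : ℝ) < k := by by_contra h; push Not at h; nlinarith
  have hk3 : k = -1 ∨ k = 0 ∨ k = 1 := by
    have : k < 2 := by exact_mod_cast hk1
    have : -2 < k := by exact_mod_cast hk2
    omega
  have he' : e = k * α - Ex - Ey := by linarith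
  subst he'
  rcases mul_pos_iff.1 hEE with ⟨hx, hy⟩ | ⟨hx, hy⟩ <;>
    rcases hk3 with rfl | rfl | rfl <;> push_cast at * <;> constructor <;> nlinarith

namespace CF

variable {α : ℝ} (c : CF α)

/-- The denominators extended like `CF.P`: `Q 0 = q_{-2} = 1`, `Q 1 = q_{-1} = 0`. -/
def Q : ℕ → ℕ
  | 0 => 1
  | 1 => 0
  | n + 2 => c.q n

/-- `err (n + 2) = q_n α - p_n`. -/
noncomputable def err (m : ℕ) : ℝ := c.Q m * α - c.P m

theorem P_add_two (m : ℕ) : c.P (m + 2) = c.a m * c.P (m + 1) + c.P m := by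
  match m with
  | 0 => simp [CF.P, c.p0]
  | 1 => show c.p 1 = c.a 1 * c.p 0 + 1; rw [c.p1, c.p0]
  | n + 2 => exact c.p_rec n

theorem Q_add_two (m : ℕ) : c.Q (m + 2) = c.a m * c.Q (m + 1) + c.Q m := by
  match m with
  | 0 => simp [Q, c.q0]
  | 1 => simp [Q, c.q0, c.q1]
  | n + 2 => exact c.q_rec n

theorem P_monotone : Monotone c.P := by
  refine monotone_nat_of_le_succ fun m => ?_
  match m with
  | 0 => exact zero_le_one
  | m + 1 => rw [P_add_two]; nlinarith [c.ha m]

theorem p_monotone : Monotone c.p := fun i j hij => c.P_monotone (by omega : i + 2 ≤ j + 2)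

theorem one_le_p (n : ℕ) : 1 ≤ c.p n := c.P_monotone (by omega : 1 ≤ n + 2)

theorem q_le_q_succ (n : ℕ) : c.q n ≤ c.q (n + 1) := by
  have h : c.q (n + 1) = c.a (n + 1) * c.q n + c.Q (n + 1) := c.Q_add_two (n + 1)
  nlinarith [c.ha (n + 1)]

theorem one_le_q (n : ℕ) : 1 ≤ c.q n := by
  induction n with
  | zero => rw [c.q0]
  | succ n ih => exact ih.trans (c.q_le_q_succ n)

theorem det (m : ℕ) :
    (c.P (m + 1) * c.Q m - c.P m * c.Q (m + 1) : ℤ) = (-1) ^ m := by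
  induction m with
  | zero => simp [CF.P, Q]
  | succ m ih =>
    have hP : (c.P (m + 2) : ℤ) = c.a m * c.P (m + 1) + c.P m := by exact_mod_cast c.P_add_two m
    have hQ : (c.Q (m + 2) : ℤ) = c.a m * c.Q (m + 1) + c.Q m := by exact_mod_cast c.Q_add_two m
    rw [hP, hQ, pow_succ, ← ih]
    ring

theorem exists_eq_combination (m : ℕ) (R X : ℤ) :
    ∃ u v : ℤ, u * c.Q m + v * c.Q (m + 1) = R ∧ u * c.P m + v * c.P (m + 1) = X := by
  set D : ℤ := (-1) ^ m
  have hD : D ^ 2 = 1 := by rw [← pow_mul, mul_comm, pow_mul, neg_one_sq, one_pow]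
  have hdet := c.det m
  exact ⟨D * (R * c.P (m + 1) - X * c.Q (m + 1)), D * (X * c.Q m - R * c.P m),
    by linear_combination (D * R) * hdet + R * hD, by linear_combination (D * X) * hdet + X * hD⟩

theorem one_le_t (n : ℕ) : 1 ≤ c.t n := by
  have : (c.a n : ℝ) ≤ c.t n := by rw [c.floor_t n]; exact Int.floor_le _
  have : (1 : ℝ) ≤ c.a n := by exact_mod_cast c.ha n
  linarith

theorem one_lt_t (n : ℕ) : 1 < c.t n := by
  have : (1 : ℝ) ≤ c.a n := by exact_mod_cast c.ha n
  have : 0 < 1 / c.t (n + 1) := by have := c.one_le_t (n + 1); positivity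
  linarith [c.t_rec n]

theorem t_mul_err_succ (m : ℕ) : c.t m * c.err (m + 1) = -c.err m := by
  induction m with
  | zero => simp [err, Q, CF.P, c.t0]
  | succ m ih =>
    have hrec : c.err (m + 2) = c.a m * c.err (m + 1) + c.err m := by
      simp only [err, c.P_add_two, c.Q_add_two]; push_cast; ring
    have htr : c.t m * c.t (m + 1) = c.a m * c.t (m + 1) + 1 := by
      have ht : c.t (m + 1) ≠ 0 := (zero_lt_one.trans (c.one_lt_t (m + 1))).ne'
      rw [c.t_rec m]; field_simp
    rw [hrec]
    linear_combination -c.err (m + 1) * htr + c.t (m + 1) * ih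

theorem err_mul_err_succ_nonpos (m : ℕ) : c.err m * c.err (m + 1) ≤ 0 := by
  have h : c.err m * c.err (m + 1) = -(c.t m * c.err (m + 1) ^ 2) := by
    linear_combination c.err (m + 1) * c.t_mul_err_succ m
  rw [h, neg_nonpos]
  exact mul_nonneg (zero_le_one.trans (c.one_le_t m)) (sq_nonneg _)

theorem abs_err_succ_le (m : ℕ) : |c.err (m + 1)| ≤ |c.err m| := by
  rw [← abs_neg (c.err m), ← c.t_mul_err_succ m, abs_mul,
    abs_of_pos (zero_lt_one.trans (c.one_lt_t m))]
  exact le_mul_of_one_le_left (abs_nonneg _) (c.one_le_t m)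

theorem abs_err_lt_one (n : ℕ) : |c.err (n + 2)| < 1 := by
  have h2 : |c.err 2| < 1 := by
    have h := c.t_mul_err_succ 1
    have ht := c.one_lt_t 1
    rw [show c.err 1 = -1 by simp [err, Q, CF.P]] at h
    rw [abs_lt]; constructor <;> nlinarith
  have hanti : Antitone fun n => |c.err (n + 2)| :=
    antitone_nat_of_succ_le fun n => c.abs_err_succ_le (n + 2)
  exact (hanti (Nat.zero_le n)).trans_lt h2

theorem err_mul_nonpos_or_two_mul_sq_le (n : ℕ) {R : ℤ} (X : ℤ) (hR : 0 < R)
    (hRq : R < c.q n) :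
    (R * α - X) * c.err (n + 2) ≤ 0 ∨
      2 * c.err (n + 2) ^ 2 ≤ (R * α - X) * c.err (n + 2) := by
  obtain ⟨u, v, hu, hv⟩ := c.exists_eq_combination (n + 2) R X
  have hRX : (R * α - X : ℝ) = u * c.err (n + 2) + v * c.err (n + 3) := by
    rw [← hu, ← hv]; simp only [err]; push_cast; ring
  have hQ : (c.Q (n + 2) : ℤ) = c.q n := rfl
  have hQ' : (c.Q (n + 3) : ℤ) = c.q (n + 1) := rfl
  rw [hRX]
  refine mul_nonpos_or_two_mul_sq_le_of_lt (Q := c.q n) (Q' := c.q (n + 1)) ?_ ?_ ?_ ?_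
    (c.err_mul_err_succ_nonpos (n + 2))
  · exact_mod_cast c.one_le_q n
  · exact_mod_cast c.q_le_q_succ n
  · rwa [← hQ, ← hQ', hu]
  · rwa [← hQ, ← hQ', hu]

theorem E_mul_E_neg (hα : 1 < α) (hirr : Irrational α) {x y n : ℕ} (hx : 0 < x) (hxy : x < y)
    (hsum : x + y = c.p n) : E α x * E α y < 0 := by
  have hα0 : 0 < α := by linarith
  set rx := round ((x : ℝ) / α)
  set ry := round ((y : ℝ) / α)
  set e := c.err (n + 2)
  set k : ℤ := c.q n - rx - ry
  have hk : k * α = E α x + E α y + e := by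
    have : (x + y : ℝ) = c.p n := by exact_mod_cast hsum
    simp only [k, e, E, err, rx, ry, CF.P, Q]; push_cast; linarith
  have he : |e| < 1 := c.abs_err_lt_one n
  by_contra hnonneg
  have hEE : 0 < E α x * E α y := (not_lt.1 hnonneg).lt_of_ne
    (mul_ne_zero (E_ne_zero hirr hx) (E_ne_zero hirr (by omega))).symm
  obtain ⟨hde, hde'⟩ := mul_pos_and_lt_two_mul_sq hα (abs_E_lt_half hα0 hirr x)
    (abs_E_lt_half hα0 hirr y) hEE he hk
  -- The competitor `(2 rx + k) α - 2 x` beats the convergent `q_n α - p_n`.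
  set R : ℤ := 2 * rx + k
  have hd : (R * α - (2 * x : ℤ) : ℝ) = k * α - 2 * E α x := by
    simp only [R, E, rx]; push_cast; ring
  rw [abs_lt] at he
  have hqe : (c.q n : ℝ) * α = c.p n + e := by simp only [e, err, CF.P, Q]; ring
  have hX : (2 * x + 1 : ℝ) ≤ c.p n := by exact_mod_cast (by omega : 2 * x + 1 ≤ c.p n)
  have hx1 : (1 : ℝ) ≤ x := by exact_mod_cast hx
  have hdb : -2 < k * α - 2 * E α x ∧ k * α - 2 * E α x < e + 1 := by
    have he0 : e ≠ 0 := by rintro h; rw [h, mul_zero] at hde; exact lt_irrefl _ hde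
    rcases lt_or_gt_of_ne he0 with he0 | he0 <;> constructor <;> nlinarith
  have hRpos : 0 < R := by
    have : (0 : ℝ) < R * α := by push_cast at hd; linarith
    exact_mod_cast pos_of_mul_pos_left this hα0.le
  have hRq : R < c.q n := by
    have : (R : ℝ) * α < c.q n * α := by push_cast at hd; linarith
    exact_mod_cast lt_of_mul_lt_mul_right this hα0.le
  rcases c.err_mul_nonpos_or_two_mul_sq_le n (2 * x) hRpos hRq with h | h <;>
    rw [hd] at h <;> linarith

theorem avoids_Aset (hα : 1 < α) (hirr : Irrational α) :
    Avoids {m : ℕ+ | (m : ℕ) ∈ Aset α} {m : ℕ+ | ∃ n, (m : ℕ) = c.p n} := by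
  have hA : {m : ℕ+ | (m : ℕ) ∈ Aset α} = {m : ℕ+ | E α m < 0} := by
    ext m; simp [Aset]
  rw [hA]
  refine avoids_setOf_neg (fun m : ℕ+ => E α m) fun x y ⟨hne, n, hn⟩ => ?_
  rw [PNat.add_coe] at hn
  rcases lt_or_gt_of_ne (PNat.coe_injective.ne hne) with hxy | hxy
  · exact c.E_mul_E_neg hα hirr x.pos hxy hn
  · exact mul_comm (E α x) _ ▸ c.E_mul_E_neg hα hirr y.pos hxy (n := n) (by omega)

end CF

/-- If `p (n+1) > 2 * p n` for all `n ≥ N` (only finitely many partial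
quotients equal `1`), then the set of convergent numerators admits more than
one avoiding partition of `ℕ+`. -/
theorem stmt17 (α : ℝ) (hα : 1 < α) (hirr : Irrational α) (c : CF α)
    (N : ℕ) (h : ∀ n, N ≤ n → 2 * c.p n < c.p (n + 1)) :
    ∃ A A' : Set ℕ+, Avoids A {m : ℕ+ | ∃ n, (m : ℕ) = c.p n} ∧
      Avoids A' {m : ℕ+ | ∃ n, (m : ℕ) = c.p n} ∧ A' ≠ A ∧ A' ≠ Aᶜ := by
  have hA := c.avoids_Aset hα hirr
  obtain ⟨A', hA', hne, hne'⟩ := exists_avoids_ne c.p_monotone h (c.one_le_p N) hA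
  exact ⟨_, A', hA, hA', hne, hne'⟩
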